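/- arXiv:1302.2543 — 4 statements merged into one kernel-verified Lean document; each statement's English description precedes it below -/
import Mathlib

section
/- Let d ≥ 1 and f ≥ 1 be integers, and let y₁, …, y_N be a family of N ≥ (d+1)f + 1 points in ℝ^d (points may repeat). Then Γ(y) is non-empty; that is, the intersection over all subsets T of {1, …, N} with |T| = N − f of the convex hulls conv{y_i : i ∈ T} is non-empty. -/
/-!
Each set `conv {y i : i ∈ T}` is convex, so by Helly's theorem it suffices that any `d + 1` of
them meet. Any `d + 1` index sets of size `N - f` omit at most `(d + 1) f < N` indices between
them, so some index `i` lies in all of them, and then `y i` lies in all their convex hulls.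
-/

open Finset Module

theorem Finset.exists_forall_mem_of_card_mul_lt {α : Type*} [Fintype α] [DecidableEq α]
    {I : Finset (Finset α)} {f : ℕ} (hI : ∀ T ∈ I, #Tᶜ ≤ f)
    (hcard : #I * f < Fintype.card α) : ∃ a, ∀ T ∈ I, a ∈ T := by
  by_contra! h
  have hcover : (univ : Finset α) ⊆ I.biUnion (·ᶜ) := fun a _ => by
    obtain ⟨T, hT, haT⟩ := h a
    exact mem_biUnion.2 ⟨T, hT, mem_compl.2 haT⟩
  have := calc
    Fintype.card α = #(univ : Finset α) := card_univ.symm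
    _ ≤ #(I.biUnion (·ᶜ)) := card_le_card hcover
    _ ≤ ∑ T ∈ I, #Tᶜ := card_biUnion_le
    _ ≤ #I • f := sum_le_card_nsmul I _ f hI
    _ = #I * f := smul_eq_mul ..
  omega

theorem Convex.biInter_convexHull_image_nonempty {ι 𝕜 E : Type*} [Field 𝕜] [LinearOrder 𝕜]
    [IsStrictOrderedRing 𝕜] [AddCommGroup E] [Module 𝕜 E] [FiniteDimensional 𝕜 E]
    (y : ι → E) {s : Finset (Finset ι)}
    (h : ∀ I ⊆ s, #I ≤ finrank 𝕜 E + 1 → ∃ i, ∀ T ∈ I, i ∈ T) :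
    (⋂ T ∈ s, convexHull 𝕜 (y '' T)).Nonempty := by
  refine Convex.helly_theorem' (fun T _ => convex_convexHull 𝕜 _) fun I hI hIcard => ?_
  obtain ⟨i, hi⟩ := h I hI hIcard
  exact ⟨y i, Set.mem_iInter₂.2 fun T hT => subset_convexHull 𝕜 _ ⟨i, hi T hT, rfl⟩⟩

theorem gamma_nonempty_general (d f N : ℕ)
    (hN : (d + 1) * f + 1 ≤ N) (y : Fin N → (Fin d → ℝ)) :
    (⋂ (T : Finset (Fin N)) (_ : T.card = N - f),
        convexHull ℝ (y '' (T : Set (Fin N)))).Nonempty := by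
  have hcompl : ∀ T : Finset (Fin N), #T = N - f → #Tᶜ ≤ f := fun T hT => by
    rw [card_compl, hT, Fintype.card_fin]
    omega
  have key : (⋂ T ∈ univ.filter fun T : Finset (Fin N) => #T = N - f,
      convexHull ℝ (y '' T)).Nonempty := by
    refine Convex.biInter_convexHull_image_nonempty y fun I hI hIcard => ?_
    rw [finrank_fin_fun] at hIcard
    refine exists_forall_mem_of_card_mul_lt (fun T hT => hcompl T (mem_filter.1 (hI hT)).2) ?_
    calc #I * f ≤ (d + 1) * f := Nat.mul_le_mul_right f hIcard
      _ < Fintype.card (Fin N) := by rw [Fintype.card_fin]; omega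
  simpa using key

/-- For `d ≥ 1`, `f ≥ 1` and a family of `N ≥ (d+1)f + 1` points in `ℝ^d`,
the intersection, over all subsets `T` of the index set with `|T| = N - f`, of the convex
hulls `conv {y i : i ∈ T}` is non-empty. -/
theorem gamma_nonempty (d f N : ℕ) (hd : 1 ≤ d) (hf : 1 ≤ f)
    (hN : (d + 1) * f + 1 ≤ N) (y : Fin N → (Fin d → ℝ)) :
    (⋂ (T : Finset (Fin N)) (_ : T.card = N - f),
        convexHull ℝ (y '' (T : Set (Fin N)))).Nonempty :=
  gamma_nonempty_general d f N hN y
end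

section
/- (Tverberg's theorem.) For any integers d ≥ 1 and f ≥ 1, and for every family of points y₁, …, y_N in ℝ^d (points may repeat) with N ≥ (d+1)f + 1, there exists a partition of the index set {1, …, N} into f + 1 non-empty pairwise disjoint subsets I₁, …, I_{f+1} such that the intersection ⋂_{l=1}^{f+1} conv{y_i : i ∈ I_l} is non-empty. -/
/-!
Sarkaria's proof. Lift each point `y i` to the `f + 1` vectors `(y i, 1) ⊗ v j` of
`ℝ^(d+1) ⊗ ℝ^f`, where `v 0, …, v f ∈ ℝ^f` sum to zero and satisfy no other linear relation, so
that `0` lies in the convex hull of the lifts of each `y i`. As `N > (d + 1) f`, Bárány's colorful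
Carathéodory theorem picks one lift `(y i, 1) ⊗ v (c i)` of every point with `0` in the convex hull
of the choice. Reading off the coefficient of each `v j`, the weighted sums of `(y i, 1)` over the
classes `c⁻¹ {j}` all agree: the classes have the same positive mass and the same center of mass.

Colorful Carathéodory: let `z` have least norm among the convex hulls of all transversals. If
`z ≠ 0`, it lies on the face `⟪z, ·⟫ = ‖z‖²` of its hull, hence in the hull of at most `dim E` of
the chosen points; recoloring an unused color by a point `x` with `⟪z, x⟫ ≤ 0` gives a transversal
whose hull contains a point shorter than `z`.
-/

open Finset Set Module
open scoped RealInnerProductSpace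

theorem AffineIndependent.card_le_finrank_of_map_eq {k V ι : Type*} [Field k] [AddCommGroup V]
    [Module k V] [FiniteDimensional k V] [Fintype ι] {p : ι → V}
    (hp : AffineIndependent k p) {φ : V →ₗ[k] k} (hφ : φ ≠ 0) {c : k}
    (hc : ∀ i, φ (p i) = c) : Fintype.card ι ≤ finrank k V := by
  have hspan : vectorSpan k (range p) ≤ LinearMap.ker φ := by
    rw [vectorSpan_def, Submodule.span_le]
    rintro _ ⟨_, ⟨i, rfl⟩, _, ⟨j, rfl⟩, rfl⟩
    simp [hc]
  have hker : finrank k (LinearMap.ker φ) < finrank k V :=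
    Submodule.finrank_lt (by rwa [Ne, LinearMap.ker_eq_top])
  have := Submodule.finrank_mono hspan
  have := hp.card_le_finrank_succ
  omega

theorem exists_mem_nonpos_of_zero_mem_convexHull {E : Type*} [AddCommGroup E] [Module ℝ E]
    {s : Set E} (φ : E →ₗ[ℝ] ℝ) (h : (0 : E) ∈ convexHull ℝ s) : ∃ x ∈ s, φ x ≤ 0 := by
  by_contra! hpos
  have h₀ : (0 : E) ∈ {x | 0 < φ x} := convexHull_min hpos (convex_halfSpace_gt φ.isLinear 0) h
  simp at h₀

theorem exists_sum_smul_eq_of_mem_convexHull_range {E ι : Type*} [AddCommGroup E]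
    [Module ℝ E] [Fintype ι] {v : ι → E} {x : E} (hx : x ∈ convexHull ℝ (range v)) :
    ∃ w : ι → ℝ, (∀ i, 0 ≤ w i) ∧ ∑ i, w i = 1 ∧ ∑ i, w i • v i = x := by
  classical
  rw [convexHull_range_eq_exists_affineCombination] at hx
  obtain ⟨s, w, hw₀, hw₁, rfl⟩ := hx
  refine ⟨fun i => if i ∈ s then w i else 0, fun i => ?_, ?_, ?_⟩
  · dsimp only
    split_ifs with hi
    exacts [hw₀ i hi, le_rfl]
  · simpa [Finset.sum_ite_mem] using hw₁
  · simp [s.affineCombination_eq_linear_combination v w hw₁, ite_smul, Finset.sum_ite_mem]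

theorem zero_mem_convexHull_range_of_sum_eq_zero {E κ : Type*} [AddCommGroup E] [Module ℝ E]
    [Fintype κ] [Nonempty κ] {v : κ → E} (h : ∑ j, v j = 0) :
    (0 : E) ∈ convexHull ℝ (range v) := by
  have := (Finset.univ : Finset κ).centerMass_mem_convexHull (w := fun _ => (1 : ℝ)) (z := v)
    (fun _ _ => zero_le_one) (by simp [Fintype.card_pos]) fun j _ => mem_range_self j
  simpa [Finset.centerMass, h] using this

theorem exists_forall_isMinOn_norm_convexHull {E ι : Type*} [NormedAddCommGroup E]
    [NormedSpace ℝ E] [Finite ι] [Nonempty ι] (𝒯 : Finset (ι → E)) (h𝒯 : 𝒯.Nonempty) :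
    ∃ T ∈ 𝒯, ∃ z ∈ convexHull ℝ (range T),
      ∀ T' ∈ 𝒯, IsMinOn norm (convexHull ℝ (range T')) z := by
  set U := ⋃ T ∈ 𝒯, convexHull ℝ (range T)
  have hU : IsCompact U :=
    𝒯.finite_toSet.isCompact_biUnion fun T _ => (finite_range T).isCompact_convexHull (𝕜 := ℝ)
  obtain ⟨T₀, hT₀⟩ := h𝒯
  have hU_ne : U.Nonempty :=
    ⟨_, mem_biUnion hT₀ (subset_convexHull ℝ _ (mem_range_self (Classical.arbitrary ι)))⟩
  obtain ⟨z, hzU, hzmin⟩ := hU.exists_isMinOn hU_ne continuous_norm.continuousOn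
  obtain ⟨T, hT, hzT⟩ := mem_iUnion₂.1 hzU
  exact ⟨T, hT, z, hzT, fun T' hT' =>
    hzmin.on_subset (subset_biUnion_of_mem (u := fun T => convexHull ℝ (range T)) hT')⟩

section InnerProductSpace

variable {E : Type*} [NormedAddCommGroup E] [InnerProductSpace ℝ E]

theorem inner_self_le_inner_of_isMinOn_norm {K : Set E} (hK : Convex ℝ K) {z : E} (hz : z ∈ K)
    (hmin : IsMinOn norm K z) {y : E} (hy : y ∈ K) : ⟪z, z⟫ ≤ ⟪z, y⟫ := by
  have : Nonempty K := ⟨⟨z, hz⟩⟩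
  have hbdd : BddBelow (range fun w : K => ‖(0 : E) - w‖) :=
    ⟨0, forall_mem_range.2 fun _ => norm_nonneg _⟩
  have hinf : ‖0 - z‖ = ⨅ w : K, ‖(0 : E) - w‖ :=
    le_antisymm (le_ciInf fun w => by simpa using hmin w.2) (ciInf_le hbdd ⟨z, hz⟩)
  have := (norm_eq_iInf_iff_real_inner_le_zero hK hz).1 hinf y hy
  simp only [zero_sub, inner_neg_left, inner_sub_right] at this
  linarith

theorem exists_finset_card_le_finrank_mem_convexHull [FiniteDimensional ℝ E] {ι : Type*}
    {T : ι → E} {z : E} (hz₀ : z ≠ 0) (hz : z ∈ convexHull ℝ (range T))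
    (hsupp : ∀ y ∈ convexHull ℝ (range T), ⟪z, z⟫ ≤ ⟪z, y⟫) :
    ∃ s : Finset ι, #s ≤ finrank ℝ E ∧ z ∈ convexHull ℝ (T '' s) := by
  classical
  obtain ⟨κ, _, p, w, hp_range, hp_ind, hw_pos, hw_sum, hw_z⟩ :=
    eq_pos_convex_span_of_mem_convexHull hz
  have hface : ∀ i, ⟪z, p i⟫ = ⟪z, z⟫ := by
    have hge : ∀ i, ⟪z, z⟫ ≤ ⟪z, p i⟫ := fun i =>
      hsupp _ (subset_convexHull ℝ _ (hp_range (mem_range_self i)))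
    have hp : ∑ i, w i * ⟪z, p i⟫ = ⟪z, z⟫ := by
      simp_rw [← real_inner_smul_right, ← inner_sum, hw_z]
    have hsum : ∑ i, w i * (⟪z, p i⟫ - ⟪z, z⟫) = 0 := by
      rw [Finset.sum_congr rfl fun i _ => mul_sub _ _ _, Finset.sum_sub_distrib, hp,
        ← Finset.sum_mul, hw_sum, one_mul, sub_self]
    intro i
    have := (Finset.sum_eq_zero_iff_of_nonneg fun i _ =>
      mul_nonneg (hw_pos i).le (sub_nonneg.2 (hge i))).1 hsum i (mem_univ i)
    have := (mul_eq_zero.1 this).resolve_left (hw_pos i).ne'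
    linarith
  choose g hg using fun i => hp_range (mem_range_self i)
  have hφ : innerₗ E z ≠ 0 := fun h => hz₀ (by simpa using LinearMap.congr_fun h z)
  refine ⟨univ.image g, card_image_le.trans (hp_ind.card_le_finrank_of_map_eq hφ hface), ?_⟩
  rw [← hw_z]
  refine (convex_convexHull ℝ _).sum_mem (fun i _ => (hw_pos i).le) hw_sum fun i _ => ?_
  exact subset_convexHull ℝ _ ⟨g i, by simp, hg i⟩

theorem exists_colorful_zero_mem_convexHull [FiniteDimensional ℝ E] {ι : Type*} [Fintype ι]
    (hcard : finrank ℝ E < Fintype.card ι) (S : ι → Finset E)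
    (hS : ∀ i, (0 : E) ∈ convexHull ℝ (S i : Set E)) :
    ∃ c : ι → E, (∀ i, c i ∈ S i) ∧ (0 : E) ∈ convexHull ℝ (range c) := by
  classical
  have : Nonempty ι := Fintype.card_pos_iff.1 (by omega)
  have hS_ne : (Fintype.piFinset S).Nonempty := Fintype.piFinset_nonempty.2 fun i =>
    Finset.coe_nonempty.1 (convexHull_nonempty_iff.1 ⟨0, hS i⟩)
  obtain ⟨T, hT, z, hzT, hmin⟩ := exists_forall_isMinOn_norm_convexHull _ hS_ne
  refine ⟨T, Fintype.mem_piFinset.1 hT, ?_⟩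
  rcases eq_or_ne z 0 with rfl | hz₀
  · exact hzT
  exfalso
  obtain ⟨s, hs_card, hzs⟩ := exists_finset_card_le_finrank_mem_convexHull hz₀ hzT
    fun y => inner_self_le_inner_of_isMinOn_norm (convex_convexHull ℝ _) hzT (hmin T hT)
  obtain ⟨i₀, -, hi₀⟩ := exists_mem_notMem_of_card_lt_card (s := s) (t := univ)
    (by rw [card_univ]; omega)
  -- recolor `i₀`, which `z` does not need, by a point of `S i₀` on the far side of `z`
  obtain ⟨x, hxS, hx⟩ := exists_mem_nonpos_of_zero_mem_convexHull (innerₗ E z) (hS i₀)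
  set T' := Function.update T i₀ x
  have hT' : T' ∈ Fintype.piFinset S := Fintype.mem_piFinset.2 fun i => by
    rcases eq_or_ne i i₀ with rfl | hi
    · simpa [T'] using hxS
    · simpa [T', hi] using Fintype.mem_piFinset.1 hT i
  have hzT' : z ∈ convexHull ℝ (range T') := by
    refine convexHull_mono ?_ hzs
    rintro _ ⟨i, hi, rfl⟩
    exact ⟨i, Function.update_of_ne (ne_of_mem_of_not_mem hi hi₀) _ _⟩
  have hxT' : x ∈ convexHull ℝ (range T') :=
    subset_convexHull ℝ _ ⟨i₀, Function.update_self _ _ _⟩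
  have hzx : ⟪z, z⟫ ≤ ⟪z, x⟫ :=
    inner_self_le_inner_of_isMinOn_norm (convex_convexHull ℝ _) hzT' (hmin T' hT') hxT'
  exact (real_inner_self_pos.2 hz₀).not_ge (hzx.trans hx)

end InnerProductSpace

section Sarkaria

variable {d f : ℕ} {ι : Type*}

/-- `f + 1` vectors of `ℝ^f` whose only linear relation is that they sum to zero. -/
def sarkariaVec (f : ℕ) (j : Fin (f + 1)) (l : Fin f) : ℝ :=
  (if j = l.castSucc then 1 else 0) - (if j = Fin.last f then 1 else 0)

theorem sum_sarkariaVec (l : Fin f) : ∑ j, sarkariaVec f j l = 0 := by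
  simp [sarkariaVec, Finset.sum_sub_distrib]

/-- The tensor `(y i, 1) ⊗ sarkariaVec f j`; the coordinate `none` of `Option (Fin d)` carries
the `1`. -/
def sarkariaLift (y : ι → Fin d → ℝ) (i : ι) (j : Fin (f + 1)) :
    EuclideanSpace ℝ (Option (Fin d) × Fin f) :=
  WithLp.toLp 2 fun p => p.1.elim 1 (y i) * sarkariaVec f j p.2

theorem sum_sarkariaLift (y : ι → Fin d → ℝ) (i : ι) : ∑ j, sarkariaLift (f := f) y i j = 0 := by
  ext p
  simp [sarkariaLift, ← Finset.mul_sum, sum_sarkariaVec]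

theorem sum_fiber_eq_of_sum_smul_sarkariaLift_eq_zero [Fintype ι] {y : ι → Fin d → ℝ} {w : ι → ℝ}
    {c : ι → Fin (f + 1)} (h : ∑ i, w i • sarkariaLift y i (c i) = 0) (k : Option (Fin d))
    (l : Fin (f + 1)) :
    ∑ i with c i = l, w i * k.elim 1 (y i) = ∑ i with c i = Fin.last f, w i * k.elim 1 (y i) := by
  induction l using Fin.lastCases with
  | last => rfl
  | cast l =>
    have hkl := congrArg (· (k, l)) h
    simp only [WithLp.ofLp_sum, WithLp.ofLp_smul, Finset.sum_apply, Pi.smul_apply, smul_eq_mul,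
      sarkariaLift, sarkariaVec, mul_sub, mul_ite, mul_one, mul_zero,
      Finset.sum_sub_distrib, ← Finset.sum_filter, WithLp.ofLp_zero, Pi.zero_apply] at hkl
    linarith

theorem exists_tverberg_partition_of_sum_smul_sarkariaLift_eq_zero [Fintype ι] [DecidableEq ι]
    {y : ι → Fin d → ℝ} {w : ι → ℝ} (hw₀ : ∀ i, 0 ≤ w i) (hw₁ : ∑ i, w i = 1) {c : ι → Fin (f + 1)}
    (h : ∑ i, w i • sarkariaLift y i (c i) = 0) :
    ∃ I : Fin (f + 1) → Finset ι,
      (∀ l, (I l).Nonempty) ∧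
      (∀ l l', l ≠ l' → Disjoint (I l) (I l')) ∧
      (Finset.univ.biUnion I = Finset.univ) ∧
      (⋂ l, convexHull ℝ (y '' (I l : Set ι))).Nonempty := by
  set t := ∑ i with c i = Fin.last f, w i
  have hmass (l : Fin (f + 1)) : ∑ i with c i = l, w i = t := by
    simpa using sum_fiber_eq_of_sum_smul_sarkariaLift_eq_zero h none l
  have hmoment (l : Fin (f + 1)) :
      ∑ i with c i = l, w i • y i = ∑ i with c i = Fin.last f, w i • y i := by
    ext k
    simpa [Finset.sum_apply] using sum_fiber_eq_of_sum_smul_sarkariaLift_eq_zero h (some k) l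
  have ht : 0 < t := by
    have := Finset.sum_fiberwise Finset.univ c w
    simp only [hmass, sum_const, card_univ, Fintype.card_fin, nsmul_eq_mul, hw₁] at this
    nlinarith
  refine ⟨fun l => {i | c i = l}, fun l => nonempty_of_sum_ne_zero (hmass l ▸ ht.ne'),
    fun l l' hll' => disjoint_filter.2 fun i _ hl hl' => hll' (hl ▸ hl'), by ext; simp,
    t⁻¹ • ∑ i with c i = Fin.last f, w i • y i, mem_iInter.2 fun l => ?_⟩
  have := centerMass_mem_convexHull {i | c i = l} (fun i _ => hw₀ i) (hmass l ▸ ht)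
    fun i hi => Set.mem_image_of_mem y hi
  rwa [Finset.centerMass, hmass, hmoment] at this

end Sarkaria

theorem tverberg_general (d f N : ℕ)
    (hN : (d + 1) * f + 1 ≤ N) (y : Fin N → (Fin d → ℝ)) :
    ∃ I : Fin (f + 1) → Finset (Fin N),
      (∀ l, (I l).Nonempty) ∧
      (∀ l l', l ≠ l' → Disjoint (I l) (I l')) ∧
      (Finset.univ.biUnion I = Finset.univ) ∧
      (⋂ l : Fin (f + 1), convexHull ℝ (y '' ((I l) : Set (Fin N)))).Nonempty := by
  have hdim : finrank ℝ (EuclideanSpace ℝ (Option (Fin d) × Fin f)) < Fintype.card (Fin N) := by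
    simp only [finrank_euclideanSpace, Fintype.card_prod, Fintype.card_option, Fintype.card_fin]
    omega
  obtain ⟨p, hp_mem, hp₀⟩ := exists_colorful_zero_mem_convexHull hdim
    (fun i => Finset.univ.image (sarkariaLift y i))
    fun i => by simpa using zero_mem_convexHull_range_of_sum_eq_zero (sum_sarkariaLift y i)
  choose c hc using fun i => Finset.mem_image.1 (hp_mem i)
  obtain ⟨w, hw₀, hw₁, hw⟩ := exists_sum_smul_eq_of_mem_convexHull_range hp₀
  exact exists_tverberg_partition_of_sum_smul_sarkariaLift_eq_zero hw₀ hw₁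
    (c := c) (by simpa only [(hc _).2] using hw)

/-- Tverberg's theorem: for `d ≥ 1`, `f ≥ 1`, and a family of
`N ≥ (d+1)f + 1` points in `ℝ^d`, there is a partition of the index set
into `f + 1` non-empty pairwise disjoint parts whose convex hulls have a common point. -/
theorem tverberg (d f N : ℕ) (hd : 1 ≤ d) (hf : 1 ≤ f)
    (hN : (d + 1) * f + 1 ≤ N) (y : Fin N → (Fin d → ℝ)) :
    ∃ I : Fin (f + 1) → Finset (Fin N),
      (∀ l, (I l).Nonempty) ∧
      (∀ l l', l ≠ l' → Disjoint (I l) (I l')) ∧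
      (Finset.univ.biUnion I = Finset.univ) ∧
      (⋂ l : Fin (f + 1), convexHull ℝ (y '' ((I l) : Set (Fin N)))).Nonempty :=
  tverberg_general d f N hN y
end

section
/- Let m ≥ 1, let x₁, …, x_m be real numbers, and let γ be a real number with 0 < γ ≤ 1. Suppose α₁, …, α_m and β₁, …, β_m are non-negative reals with Σ_{k=1}^{m} α_k = 1 and Σ_{k=1}^{m} β_k = 1, and suppose there is an index g with α_g ≥ γ and β_g ≥ γ. Then |Σ_{k=1}^{m} α_k x_k − Σ_{k=1}^{m} β_k x_k| ≤ (1 − γ)·(max_{1≤k≤m} x_k − min_{1≤k≤m} x_k). -/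
/-!
Removing the guaranteed weight `γ` at `g` from either combination leaves non-negative weights
of total mass `1 - γ`, so both `∑ α k * x k - γ * x g` and `∑ β k * x k - γ * x g` lie in
`[(1 - γ) * min x, (1 - γ) * max x]`, and subtracting the common term `γ * x g` does not
change the difference of the two combinations.
-/

open Finset Set

section WeightedSums

variable {ι : Type*} [Fintype ι] {x : ι → ℝ} {L M : ℝ}

theorem sum_mul_mem_Icc_of_nonneg (hL : ∀ k, L ≤ x k) (hM : ∀ k, x k ≤ M)
    {c : ι → ℝ} (hc : ∀ k, 0 ≤ c k) :
    ∑ k, c k * x k ∈ Icc ((∑ k, c k) * L) ((∑ k, c k) * M) := by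
  rw [sum_mul, sum_mul]
  exact ⟨sum_le_sum fun k _ => mul_le_mul_of_nonneg_left (hL k) (hc k),
    sum_le_sum fun k _ => mul_le_mul_of_nonneg_left (hM k) (hc k)⟩

theorem sum_mul_sub_mul_mem_Icc [DecidableEq ι] (hL : ∀ k, L ≤ x k) (hM : ∀ k, x k ≤ M)
    {c : ι → ℝ} (hc : ∀ k, 0 ≤ c k) (hcs : ∑ k, c k = 1) {γ : ℝ} {g : ι} (hcg : γ ≤ c g) :
    ∑ k, c k * x k - γ * x g ∈ Icc ((1 - γ) * L) ((1 - γ) * M) := by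
  set d := c - Pi.single g γ
  have hd : ∀ k, 0 ≤ d k := by
    intro k
    rcases eq_or_ne k g with rfl | hkg
    · simpa [d] using hcg
    · simpa [d, hkg] using hc k
  have hds : ∑ k, d k = 1 - γ := by
    simp only [d, Pi.sub_apply, sum_sub_distrib, hcs, Fintype.sum_pi_single']
  have hdx : ∑ k, d k * x k = ∑ k, c k * x k - γ * x g := by
    simp only [d, Pi.sub_apply, sub_mul, sum_sub_distrib, ← Pi.single_mul_left_apply,
      Fintype.sum_pi_single']
  rw [← hdx, ← hds]
  exact sum_mul_mem_Icc_of_nonneg hL hM hd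

end WeightedSums

theorem convex_combinations_close_general (m : ℕ) (x : Fin m → ℝ)
    (γ : ℝ)
    (α β : Fin m → ℝ) (hα : ∀ k, 0 ≤ α k) (hβ : ∀ k, 0 ≤ β k)
    (hαs : ∑ k, α k = 1) (hβs : ∑ k, β k = 1)
    (g : Fin m) (hαg : γ ≤ α g) (hβg : γ ≤ β g) :
    |(∑ k, α k * x k) - ∑ k, β k * x k| ≤
      (1 - γ) * ((⨆ k, x k) - ⨅ k, x k) := by
  have hL : ∀ k, ⨅ k, x k ≤ x k := ciInf_le (finite_range x).bddBelow
  have hM : ∀ k, x k ≤ ⨆ k, x k := le_ciSup (finite_range x).bddAbove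
  obtain ⟨hαL, hαM⟩ := sum_mul_sub_mul_mem_Icc hL hM hα hαs hαg
  obtain ⟨hβL, hβM⟩ := sum_mul_sub_mul_mem_Icc hL hM hβ hβs hβg
  calc |(∑ k, α k * x k) - ∑ k, β k * x k|
      = |(∑ k, α k * x k - γ * x g) - (∑ k, β k * x k - γ * x g)| := by ring_nf
    _ ≤ (1 - γ) * (⨆ k, x k) - (1 - γ) * ⨅ k, x k := abs_sub_le_of_le_of_le hαL hαM hβL hβM
    _ = (1 - γ) * ((⨆ k, x k) - ⨅ k, x k) := by ring

/-- two convex combinations of the reals `x 1, …, x m` that both give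
weight at least `γ` to a common index `g` differ by at most `(1 - γ)` times the range
`max x - min x`. -/
theorem convex_combinations_close (m : ℕ) (hm : 1 ≤ m) (x : Fin m → ℝ)
    (γ : ℝ) (hγ0 : 0 < γ) (hγ1 : γ ≤ 1)
    (α β : Fin m → ℝ) (hα : ∀ k, 0 ≤ α k) (hβ : ∀ k, 0 ≤ β k)
    (hαs : ∑ k, α k = 1) (hβs : ∑ k, β k = 1)
    (g : Fin m) (hαg : γ ≤ α g) (hβg : γ ≤ β g) :
    |(∑ k, α k * x k) - ∑ k, β k * x k| ≤
      (1 - γ) * ((⨆ k, x k) - ⨅ k, x k) :=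
  convex_combinations_close_general m x γ α β hα hβ hαs hβs g hαg hβg
end

section
/- Let m ≥ 1, let γ be a real number with 0 < γ ≤ 1, and let v₁, …, v_m and v'₁, …, v'_m be real numbers. Suppose there is an m×m matrix M with non-negative entries whose rows each sum to 1, such that v'_i = Σ_{k=1}^{m} M_{ik} v_k for every i, and such that for every pair of indices i, j there exists an index g(i,j) with M_{i,g(i,j)} ≥ γ and M_{j,g(i,j)} ≥ γ. Then max_{1≤i≤m} v'_i − min_{1≤i≤m} v'_i ≤ (1 − γ)·(max_{1≤k≤m} v_k − min_{1≤k≤m} v_k). -/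
/-!
Writing `v' i - v' j = ∑ₖ (M i k - M j k) (v k - min v)`, only the columns where row `i`
outweighs row `j` contribute positively, each by at most `(M i k - M j k) (max v - min v)`.
Their total weight is `1 - ∑ₖ min (M i k) (M j k)`, and the shared column `g` puts at least `γ`
into that overlap.
-/

open Finset

section
variable {ι : Type*} [Fintype ι]

theorem sum_mul_sub_sum_mul_le {p q v : ι → ℝ} {a b : ℝ} (hpq : ∑ k, p k = ∑ k, q k)
    (ha : ∀ k, a ≤ v k) (hb : ∀ k, v k ≤ b) :
    ∑ k, p k * v k - ∑ k, q k * v k ≤ (∑ k, p k - ∑ k, min (p k) (q k)) * (b - a) := by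
  have hshift : ∑ k, p k * v k - ∑ k, q k * v k = ∑ k, (p k - q k) * (v k - a) := by
    simp only [sub_mul, mul_sub, sum_sub_distrib, ← sum_mul, hpq]
    ring
  have hterm : ∀ k, (p k - q k) * (v k - a) ≤ (p k - min (p k) (q k)) * (b - a) := by
    intro k
    rcases le_total (p k) (q k) with hle | hle
    · rw [min_eq_left hle, sub_self, zero_mul]
      exact mul_nonpos_of_nonpos_of_nonneg (sub_nonpos.2 hle) (sub_nonneg.2 (ha k))
    · rw [min_eq_right hle]
      exact mul_le_mul_of_nonneg_left (by linarith [hb k]) (sub_nonneg.2 hle)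
  calc ∑ k, p k * v k - ∑ k, q k * v k = ∑ k, (p k - q k) * (v k - a) := hshift
    _ ≤ ∑ k, (p k - min (p k) (q k)) * (b - a) := sum_le_sum fun k _ ↦ hterm k
    _ = (∑ k, p k - ∑ k, min (p k) (q k)) * (b - a) := by rw [← sum_sub_distrib, sum_mul]

theorem le_sum_min_of_le {p q : ι → ℝ} (hp : ∀ k, 0 ≤ p k) (hq : ∀ k, 0 ≤ q k) {γ : ℝ} {g : ι}
    (hpg : γ ≤ p g) (hqg : γ ≤ q g) : γ ≤ ∑ k, min (p k) (q k) :=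
  (le_min hpg hqg).trans <|
    single_le_sum (f := fun k ↦ min (p k) (q k)) (fun k _ ↦ le_min (hp k) (hq k)) (mem_univ g)

end

theorem ciSup_sub_ciInf_le_of_forall_sub_le {ι : Type*} [Finite ι] [Nonempty ι] {f : ι → ℝ}
    {c : ℝ} (h : ∀ i j, f i - f j ≤ c) : (⨆ i, f i) - ⨅ i, f i ≤ c := by
  obtain ⟨i, hi⟩ := Finite.exists_max f
  obtain ⟨j, hj⟩ := Finite.exists_min f
  linarith [ciSup_le hi, le_ciInf hj, h i j]

theorem averaging_contracts_range_general (m : ℕ)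
    (γ : ℝ)
    (v v' : Fin m → ℝ) (M : Fin m → Fin m → ℝ)
    (hMnn : ∀ i k, 0 ≤ M i k) (hMrow : ∀ i, ∑ k, M i k = 1)
    (hupd : ∀ i, v' i = ∑ k, M i k * v k)
    (hpair : ∀ i j, ∃ g, γ ≤ M i g ∧ γ ≤ M j g) :
    (⨆ i, v' i) - (⨅ i, v' i) ≤ (1 - γ) * ((⨆ k, v k) - ⨅ k, v k) := by
  rcases isEmpty_or_nonempty (Fin m) with hm | hm
  · simp
  have hfin := Set.finite_range v
  have ha : ∀ k, ⨅ l, v l ≤ v k := ciInf_le hfin.bddBelow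
  have hb : ∀ k, v k ≤ ⨆ l, v l := le_ciSup hfin.bddAbove
  have hab : ⨅ k, v k ≤ ⨆ k, v k := ciInf_le_ciSup hfin.bddBelow hfin.bddAbove
  refine ciSup_sub_ciInf_le_of_forall_sub_le fun i j ↦ ?_
  obtain ⟨g, hig, hjg⟩ := hpair i j
  have hoverlap := le_sum_min_of_le (hMnn i) (hMnn j) hig hjg
  calc v' i - v' j
      ≤ (∑ k, M i k - ∑ k, min (M i k) (M j k)) * ((⨆ k, v k) - ⨅ k, v k) := by
        rw [hupd i, hupd j]
        exact sum_mul_sub_sum_mul_le ((hMrow i).trans (hMrow j).symm) ha hb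
    _ ≤ (1 - γ) * ((⨆ k, v k) - ⨅ k, v k) := by
        rw [hMrow i]
        exact mul_le_mul_of_nonneg_right (by linarith) (sub_nonneg.2 hab)

/-- one row-stochastic averaging round, in which every pair of rows
shares a column where both entries are at least `γ`, contracts the range of the values
by the factor `(1 - γ)`. -/
theorem averaging_contracts_range (m : ℕ) (hm : 1 ≤ m)
    (γ : ℝ) (hγ0 : 0 < γ) (hγ1 : γ ≤ 1)
    (v v' : Fin m → ℝ) (M : Fin m → Fin m → ℝ)
    (hMnn : ∀ i k, 0 ≤ M i k) (hMrow : ∀ i, ∑ k, M i k = 1)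
    (hupd : ∀ i, v' i = ∑ k, M i k * v k)
    (hpair : ∀ i j, ∃ g, γ ≤ M i g ∧ γ ≤ M j g) :
    (⨆ i, v' i) - (⨅ i, v' i) ≤ (1 - γ) * ((⨆ k, v k) - ⨅ k, v k) :=
  averaging_contracts_range_general m γ v v' M hMnn hMrow hupd hpair
end
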